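/- Consider a rooted execution tree where at a node N at level k, job j has been assigned machine sets S_1,...,S_k along the path from the root with Σ_{t≤k} P(S_t) ≤ c for c ≤ 1, where P(S) = Σ_{i∈S} p(i,j). Let P(j,N) be the probability, starting from N, that j completes by level 2T along a path on which Σ_{t≤2T} P(S_t) ≤ c. Then P(j,N) ≤ c − Σ_{t≤k} P(S_t). -/

import Mathlib

open MeasureTheory ProbabilityTheory
open scoped ENNReal
attribute [local instance] Classical.propDecidable

/-- Job `j` is eligible given the set `U` of unfinished jobs: all of its
predecessors in the precedence dag are finished. -/
def Eligible {n : ℕ} (prec : Fin n → Fin n → Prop) (U : Finset (Fin n))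
    (j : Fin n) : Prop :=
  ∀ j', prec j' j → j' ∉ U

/-- The set of unfinished jobs at the start of step `t` (0-indexed), when the
schedule `f` (an assignment function for each unfinished-set and step) is
executed with success outcomes `X t i j ω` (machine `i` succeeds on job `j` at
step `t`).  A job completes at step `t` if it is unfinished, eligible, and some
machine assigned to it succeeds. -/
noncomputable def unfinished {Ω : Type*} {n m : ℕ}
    (prec : Fin n → Fin n → Prop)
    (f : Finset (Fin n) → ℕ → Fin m → Option (Fin n))
    (X : ℕ → Fin m → Fin n → Ω → Bool) : ℕ → Ω → Finset (Fin n)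
  | 0, _ => Finset.univ
  | t + 1, ω =>
    (unfinished prec f X t ω).filter fun j =>
      ¬(Eligible prec (unfinished prec f X t ω) j ∧
        ∃ i, f (unfinished prec f X t ω) t i = some j ∧ X t i j ω = true)

/-- Machine `i` is assigned to job `j` at step `t`: the schedule maps `i` to
`j`, and `j` is unfinished and eligible. -/
noncomputable def Assigned {Ω : Type*} {n m : ℕ}
    (prec : Fin n → Fin n → Prop)
    (f : Finset (Fin n) → ℕ → Fin m → Option (Fin n))
    (X : ℕ → Fin m → Fin n → Ω → Bool) (t : ℕ) (ω : Ω) (i : Fin m)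
    (j : Fin n) : Prop :=
  f (unfinished prec f X t ω) t i = some j ∧
    j ∈ unfinished prec f X t ω ∧ Eligible prec (unfinished prec f X t ω) j

/-- The mass accumulated by job `j` during the first `t` steps:
`Σ_{τ < t} Σ_{i assigned to j at step τ} p i j`. -/
noncomputable def mass {Ω : Type*} {n m : ℕ} (p : Fin m → Fin n → ℝ)
    (prec : Fin n → Fin n → Prop)
    (f : Finset (Fin n) → ℕ → Fin m → Option (Fin n))
    (X : ℕ → Fin m → Fin n → Ω → Bool) (j : Fin n) (t : ℕ) (ω : Ω) : ℝ :=
  ∑ τ ∈ Finset.range t, ∑ i,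
    if Assigned prec f X τ ω i j then p i j else 0

/-- The makespan of an execution: the first step by which all jobs are
finished (`∞` if they never all finish). -/
noncomputable def makespan {Ω : Type*} {n m : ℕ}
    (prec : Fin n → Fin n → Prop)
    (f : Finset (Fin n) → ℕ → Fin m → Option (Fin n))
    (X : ℕ → Fin m → Fin n → Ω → Bool) (ω : Ω) : ℝ≥0∞ :=
  ⨅ t ∈ {t : ℕ | unfinished prec f X t ω = ∅}, (t : ℝ≥0∞)


section Aux
set_option linter.unusedSectionVars false

variable {Ω : Type*} {n m : ℕ} {prec : Fin n → Fin n → Prop}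
  {f : Finset (Fin n) → ℕ → Fin m → Option (Fin n)}
  {X : ℕ → Fin m → Fin n → Ω → Bool}

lemma unfinished_congr {t : ℕ} {ω ω' : Ω}
    (h : ∀ τ < t, ∀ i i', X τ i i' ω = X τ i i' ω') :
    unfinished prec f X t ω = unfinished prec f X t ω' := by
  induction t with
  | zero => rfl
  | succ t ih =>
    have hU := ih (fun τ hτ => h τ (Nat.lt_succ_of_lt hτ))
    show Finset.filter _ _ = Finset.filter _ _
    rw [hU]
    apply Finset.filter_congr
    intro j hj
    have hk := h t (Nat.lt_succ_self t)
    simp only [hk]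

lemma mem_unfinished_succ {t : ℕ} {ω : Ω} {j : Fin n} :
    j ∈ unfinished prec f X (t + 1) ω ↔
      j ∈ unfinished prec f X t ω ∧
        ¬(Eligible prec (unfinished prec f X t ω) j ∧
          ∃ i, f (unfinished prec f X t ω) t i = some j ∧ X t i j ω = true) := by
  show j ∈ Finset.filter _ _ ↔ _
  simp [Finset.mem_filter]

lemma assigned_congr {t : ℕ} {ω ω' : Ω} {i : Fin m} {j : Fin n}
    (h : ∀ τ < t, ∀ i i', X τ i i' ω = X τ i i' ω') :
    Assigned prec f X t ω i j ↔ Assigned prec f X t ω' i j := by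
  unfold Assigned
  rw [unfinished_congr h]

lemma mass_congr {p : Fin m → Fin n → ℝ} {t : ℕ} {ω ω' : Ω} {j : Fin n}
    (h : ∀ τ < t, ∀ i i', X τ i i' ω = X τ i i' ω') :
    mass p prec f X j t ω = mass p prec f X j t ω' := by
  unfold mass
  refine Finset.sum_congr rfl fun τ hτ => Finset.sum_congr rfl fun i _ => ?_
  have hτt := Finset.mem_range.mp hτ
  have : Assigned prec f X τ ω i j ↔ Assigned prec f X τ ω' i j :=
    assigned_congr (fun τ' hτ' => h τ' (hτ'.trans hτt))
  simp only [this]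

lemma unfinished_antitone {t s : ℕ} (hst : s ≤ t) (ω : Ω) :
    unfinished prec f X t ω ⊆ unfinished prec f X s ω := by
  induction t with
  | zero => simp_all
  | succ t ih =>
    rcases Nat.eq_or_lt_of_le hst with h | h
    · rw [h]
    · exact (Finset.filter_subset _ _).trans (ih (Nat.lt_succ_iff.mp h))

lemma mass_mono {p : Fin m → Fin n → ℝ} (hp : ∀ i j, p i j ∈ Set.Icc (0:ℝ) 1)
    {t s : ℕ} (hst : s ≤ t) (ω : Ω) (j : Fin n) :
    mass p prec f X j s ω ≤ mass p prec f X j t ω := by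
  unfold mass
  refine Finset.sum_le_sum_of_subset_of_nonneg
    (Finset.range_subset_range.mpr hst) fun τ _ _ => ?_
  refine Finset.sum_nonneg fun i _ => ?_
  split
  · exact (hp i j).1
  · exact le_rfl

lemma mass_succ {p : Fin m → Fin n → ℝ} (t : ℕ) (ω : Ω) (j : Fin n) :
    mass p prec f X j (t+1) ω = mass p prec f X j t ω +
      ∑ i, if Assigned prec f X t ω i j then p i j else 0 := by
  unfold mass
  rw [Finset.sum_range_succ]

variable [MeasurableSpace Ω] {μ : Measure Ω}

lemma measurableSet_agree (hXmeas : ∀ t i j, Measurable (X t i j)) (k : ℕ) (ω₀ : Ω) :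
    MeasurableSet {ω | ∀ τ < k, ∀ i i', X τ i i' ω = X τ i i' ω₀} := by
  have : {ω | ∀ τ < k, ∀ i i', X τ i i' ω = X τ i i' ω₀} =
      ⋂ τ ∈ Set.Iio k, ⋂ i, ⋂ i', (X τ i i') ⁻¹' {X τ i i' ω₀} := by
    ext ω; simp [Set.mem_iInter]
  rw [this]
  exact MeasurableSet.biInter (Set.to_countable _) fun τ _ =>
    MeasurableSet.iInter fun i => MeasurableSet.iInter fun i' =>
      hXmeas τ i i' (measurableSet_singleton _)

lemma measurableSet_atstep (hXmeas : ∀ t i j, Measurable (X t i j)) (k : ℕ)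
    (b : Fin m → Fin n → Bool) :
    MeasurableSet {ω : Ω | ∀ i i', X k i i' ω = b i i'} := by
  have : {ω : Ω | ∀ i i', X k i i' ω = b i i'} =
      ⋂ i, ⋂ i', (X k i i') ⁻¹' {b i i'} := by
    ext ω; simp [Set.mem_iInter]
  rw [this]
  exact MeasurableSet.iInter fun i => MeasurableSet.iInter fun i' =>
    hXmeas k i i' (measurableSet_singleton _)

lemma agree_eq_biInter (k : ℕ) (ω₀ : Ω) :
    {ω | ∀ τ < k, ∀ i i', X τ i i' ω = X τ i i' ω₀} =
      ⋂ q ∈ (Finset.range k ×ˢ (Finset.univ : Finset (Fin m × Fin n))),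
        (fun ω => X q.1 q.2.1 q.2.2 ω) ⁻¹' {X q.1 q.2.1 q.2.2 ω₀} := by
  ext ω
  simp only [Set.mem_setOf_eq, Set.mem_iInter, Finset.mem_product, Finset.mem_range,
    Set.mem_preimage, Set.mem_singleton_iff, Finset.mem_univ, and_true]
  constructor
  · rintro h ⟨τ, i, i'⟩ hτ
    exact h τ hτ i i'
  · intro h τ hτ i i'
    exact h (τ, i, i') hτ

lemma measure_agree_inter (k : ℕ) (ω₀ : Ω) (i : Fin m) (j : Fin n)
    (hXindep : iIndepFun
      (fun q : ℕ × Fin m × Fin n => X q.1 q.2.1 q.2.2) μ) :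
    μ ({ω | ∀ τ < k, ∀ i i', X τ i i' ω = X τ i i' ω₀} ∩ {ω | X k i j ω = true})
      = μ {ω | X k i j ω = true} * μ {ω | ∀ τ < k, ∀ i i', X τ i i' ω = X τ i i' ω₀} := by
  classical
  set Q : Finset (ℕ × Fin m × Fin n) :=
    Finset.range k ×ˢ (Finset.univ : Finset (Fin m × Fin n)) with hQ
  set sets : ℕ × Fin m × Fin n → Set Bool :=
    fun q => if q = (k, i, j) then {true} else {X q.1 q.2.1 q.2.2 ω₀} with hsets
  have hmeas : ∀ q : ℕ × Fin m × Fin n, MeasurableSet (sets q) := by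
    intro q; rw [hsets]; dsimp only; split <;> exact measurableSet_singleton _
  have hnotmem : (k, i, j) ∉ Q := by
    simp [hQ]
  have hQsets : ∀ q ∈ Q, sets q = {X q.1 q.2.1 q.2.2 ω₀} := by
    intro q hq
    have : q.1 < k := by
      rcases Finset.mem_product.mp hq with ⟨h1, _⟩
      exact Finset.mem_range.mp h1
    rw [hsets]; dsimp only
    rw [if_neg]
    rintro rfl; exact lt_irrefl _ this
  have h1 := hXindep.measure_inter_preimage_eq_mul (insert (k, i, j) Q)
    (sets := sets) (fun q _ => hmeas q)
  have h2 := hXindep.measure_inter_preimage_eq_mul Q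
    (sets := sets) (fun q _ => hmeas q)
  have hbQ : (⋂ q ∈ Q, (fun ω => X q.1 q.2.1 q.2.2 ω) ⁻¹' sets q)
      = {ω | ∀ τ < k, ∀ i i', X τ i i' ω = X τ i i' ω₀} := by
    rw [agree_eq_biInter k ω₀]
    exact Set.iInter₂_congr fun q hq => by rw [hQsets q hq]
  have hktrue : ((fun ω => X (k,i,j).1 (k,i,j).2.1 (k,i,j).2.2 ω) ⁻¹' sets (k, i, j))
      = {ω | X k i j ω = true} := by
    rw [hsets]; dsimp only; rw [if_pos rfl]; ext ω; simp
  rw [Finset.set_biInter_insert, Finset.prod_insert hnotmem, hktrue, hbQ, ← h2, hbQ] at h1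
  rw [Set.inter_comm]
  exact h1

theorem tree_aux (μ : Measure Ω) [IsProbabilityMeasure μ]
    (p : Fin m → Fin n → ℝ) (hp : ∀ i j, p i j ∈ Set.Icc (0 : ℝ) 1)
    (hXmeas : ∀ t i j, Measurable (X t i j))
    (hXp : ∀ t i j, μ {ω | X t i j ω = true} = ENNReal.ofReal (p i j))
    (hXindep : iIndepFun
      (fun q : ℕ × Fin m × Fin n => X q.1 q.2.1 q.2.2) μ)
    (j : Fin n) (c : ℝ) (T : ℕ) :
    ∀ d k, k + d = 2 * T → ∀ ω₀ : Ω, j ∈ unfinished prec f X k ω₀ →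
      mass p prec f X j k ω₀ ≤ c →
      μ[|{ω | ∀ τ < k, ∀ i i', X τ i i' ω = X τ i i' ω₀}]
          {ω | j ∉ unfinished prec f X (2 * T) ω ∧ mass p prec f X j (2 * T) ω ≤ c}
        ≤ ENNReal.ofReal (c - mass p prec f X j k ω₀) := by
  intro d
  induction d with
  | zero =>
    intro k hkd ω₀ hunfin hmass
    have hk : k = 2 * T := by omega
    subst hk
    rw [cond_apply (measurableSet_agree hXmeas _ _) μ]
    have hAE : {ω | ∀ τ < 2 * T, ∀ i i', X τ i i' ω = X τ i i' ω₀} ∩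
        {ω | j ∉ unfinished prec f X (2 * T) ω ∧ mass p prec f X j (2 * T) ω ≤ c} = ∅ := by
      ext ω
      simp only [Set.mem_inter_iff, Set.mem_setOf_eq, Set.mem_empty_iff_false, iff_false,
        not_and]
      intro hωA hωE
      rw [unfinished_congr hωA] at hωE
      exact fun _ => hωE hunfin
    rw [hAE, measure_empty, mul_zero]
    exact zero_le
  | succ d IH =>
    intro k hkd ω₀ hunfin hmass
    have hk1 : (k + 1) + d = 2 * T := by omega
    have hk2T : k + 1 ≤ 2 * T := by omega
    set A := {ω | ∀ τ < k, ∀ i i', X τ i i' ω = X τ i i' ω₀} with hAdef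
    set E := {ω | j ∉ unfinished prec f X (2 * T) ω ∧ mass p prec f X j (2 * T) ω ≤ c}
      with hEdef
    have hA : MeasurableSet A := measurableSet_agree hXmeas _ _
    set M := mass p prec f X j k ω₀ with hMdef
    set P := ∑ i, if Assigned prec f X k ω₀ i j then p i j else 0 with hPdef
    have hP0 : 0 ≤ P := by
      refine Finset.sum_nonneg fun i _ => ?_
      split
      · exact (hp i j).1
      · exact le_rfl
    have hMP : ∀ ω ∈ A, mass p prec f X j (k+1) ω = M + P := by
      intro ω hω
      rw [mass_succ]
      have h1 : mass p prec f X j k ω = M := mass_congr hω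
      have h2 : ∀ i : Fin m, (if Assigned prec f X k ω i j then p i j else 0)
          = (if Assigned prec f X k ω₀ i j then p i j else 0) := by
        intro i
        have := assigned_congr (prec := prec) (f := f) (i := i) (j := j) (hω : ∀ τ < k, ∀ i i', X τ i i' ω = X τ i i' ω₀)
        simp only [this]
      rw [h1]
      congr 1
      exact Finset.sum_congr rfl fun i _ => h2 i
    rw [cond_apply hA μ]
    by_cases hMPc : M + P ≤ c
    · -- main case
      by_cases hA0 : μ A = 0
      · have : μ (A ∩ E) = 0 :=
          le_antisymm (le_trans (measure_mono Set.inter_subset_left) hA0.le) zero_le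
        rw [this, mul_zero]
        exact zero_le
      have hAfin : μ A ≠ ⊤ := measure_ne_top μ _
      set C := {ω | j ∉ unfinished prec f X (k+1) ω} with hCdef
      set S : Finset (Fin m) := Finset.univ.filter fun i => Assigned prec f X k ω₀ i j
        with hSdef
      -- Term 1 : completion at step k
      have hsub1 : A ∩ C ⊆ ⋃ i ∈ S, (A ∩ {ω | X k i j ω = true}) := by
        rintro ω ⟨hωA, hωC⟩
        have hUeq : unfinished prec f X k ω = unfinished prec f X k ω₀ :=
          unfinished_congr hωA
        have hjU : j ∈ unfinished prec f X k ω := by rw [hUeq]; exact hunfin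
        have hnot : ¬ (j ∈ unfinished prec f X (k+1) ω) := hωC
        rw [mem_unfinished_succ] at hnot
        push_neg at hnot
        obtain ⟨helig, i, hfi, hXk⟩ := hnot hjU
        have hAss : Assigned prec f X k ω₀ i j := by
          refine ⟨?_, hunfin, ?_⟩
          · rw [← hUeq]; exact hfi
          · rw [← hUeq]; exact helig
        refine Set.mem_iUnion₂.mpr ⟨i, ?_, hωA, hXk⟩
        simp [hSdef, hAss]
      have hterm1 : μ (A ∩ C) ≤ ENNReal.ofReal P * μ A := by
        refine le_trans (measure_mono hsub1) ?_
        refine le_trans (measure_biUnion_finset_le S _) ?_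
        have heach : ∀ i ∈ S, μ (A ∩ {ω | X k i j ω = true})
            = ENNReal.ofReal (p i j) * μ A := by
          intro i _
          rw [hAdef, measure_agree_inter k ω₀ i j hXindep, hXp k i j]
        rw [Finset.sum_congr rfl heach, ← Finset.sum_mul]
        have : ∑ i ∈ S, ENNReal.ofReal (p i j) = ENNReal.ofReal (∑ i ∈ S, p i j) := by
          rw [ENNReal.ofReal_sum_of_nonneg fun i _ => (hp i j).1]
        rw [this]
        have hPS : ∑ i ∈ S, p i j = P := by
          rw [hPdef, hSdef, Finset.sum_filter]
        rw [hPS]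
      -- Term 2 : survival at step k and the inductive bound
      set B : (Fin m → Fin n → Bool) → Set Ω :=
        fun b => {ω | ∀ i i', X k i i' ω = b i i'} with hBdef
      have hsub2 : A ∩ E ⊆ (A ∩ C) ∪ ⋃ b, (A ∩ B b ∩ E ∩ Cᶜ) := by
        rintro ω ⟨hωA, hωE⟩
        by_cases hωC : ω ∈ C
        · exact Or.inl ⟨hωA, hωC⟩
        · refine Or.inr (Set.mem_iUnion.mpr ⟨fun i i' => X k i i' ω, ?_⟩)
          exact ⟨⟨⟨hωA, fun i i' => rfl⟩, hωE⟩, hωC⟩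
      have hterm2 : ∀ b, μ (A ∩ B b ∩ E ∩ Cᶜ)
          ≤ μ (A ∩ B b) * ENNReal.ofReal (c - (M + P)) := by
        intro b
        by_cases hne : (A ∩ B b ∩ Cᶜ).Nonempty
        · obtain ⟨ω', hω'⟩ := hne
          have hω'A : ω' ∈ A := hω'.1.1
          have hω'B : ω' ∈ B b := hω'.1.2
          have hω'C : j ∈ unfinished prec f X (k+1) ω' := not_not.mp hω'.2
          have hABeq : {ω | ∀ τ < k + 1, ∀ i i', X τ i i' ω = X τ i i' ω'} = A ∩ B b := by
            ext ω
            simp only [Set.mem_setOf_eq, Set.mem_inter_iff, hAdef, hBdef]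
            constructor
            · intro h
              refine ⟨fun τ hτ i i' =>
                (h τ (Nat.lt_succ_of_lt hτ) i i').trans (hω'A τ hτ i i'), fun i i' =>
                (h k (Nat.lt_succ_self k) i i').trans (hω'B i i')⟩
            · rintro ⟨h1, h2⟩ τ hτ i i'
              rcases Nat.lt_succ_iff_lt_or_eq.mp hτ with h | rfl
              · exact (h1 τ h i i').trans (hω'A τ h i i').symm
              · exact (h2 i i').trans (hω'B i i').symm
          have hmass' : mass p prec f X j (k+1) ω' ≤ c := by
            rw [hMP ω' hω'A]; exact hMPc
          have hih := IH (k+1) hk1 ω' hω'C hmass'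
          rw [hABeq, hMP ω' hω'A] at hih
          rw [cond_apply (hA.inter (measurableSet_atstep hXmeas k b)) μ] at hih
          by_cases h0 : μ (A ∩ B b) = 0
          · refine le_trans (measure_mono ?_) (le_trans h0.le zero_le)
            intro ω hω; exact hω.1.1
          · have hfin : μ (A ∩ B b) ≠ ⊤ := measure_ne_top μ _
            have hmul := mul_le_mul_right hih (μ (A ∩ B b))
            rw [← mul_assoc, ENNReal.mul_inv_cancel h0 hfin, one_mul] at hmul
            refine le_trans (measure_mono ?_) hmul
            intro ω hω; exact ⟨hω.1.1, hω.1.2⟩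
        · have : A ∩ B b ∩ E ∩ Cᶜ = ∅ := by
            rw [Set.not_nonempty_iff_eq_empty] at hne
            apply Set.eq_empty_of_subset_empty
            rw [← hne]
            intro ω hω; exact ⟨hω.1.1, hω.2⟩
          rw [this, measure_empty]
          exact zero_le
      have hBdisj : Pairwise (Function.onFun Disjoint fun b => A ∩ B b) := by
        intro b b' hbb'
        refine Set.disjoint_left.mpr fun ω hω hω' => hbb' ?_
        funext i i'
        exact (hω.2 i i').symm.trans (hω'.2 i i')
      have hBmeas : ∀ b, MeasurableSet (A ∩ B b) := fun b =>
        hA.inter (measurableSet_atstep hXmeas k b)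
      have hsumB : ∑ b, μ (A ∩ B b) ≤ μ A := by
        have := measure_iUnion (μ := μ) hBdisj hBmeas
        rw [tsum_fintype] at this
        rw [← this]
        refine measure_mono ?_
        exact Set.iUnion_subset fun b => Set.inter_subset_left
      have hchain : μ (A ∩ E) ≤ μ A * ENNReal.ofReal (c - M) := by
        calc μ (A ∩ E) ≤ μ ((A ∩ C) ∪ ⋃ b, (A ∩ B b ∩ E ∩ Cᶜ)) := measure_mono hsub2
          _ ≤ μ (A ∩ C) + μ (⋃ b, (A ∩ B b ∩ E ∩ Cᶜ)) := measure_union_le _ _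
          _ ≤ ENNReal.ofReal P * μ A + ∑ b, μ (A ∩ B b ∩ E ∩ Cᶜ) := by
              refine add_le_add hterm1 ?_
              refine le_trans (measure_iUnion_le _) ?_
              rw [tsum_fintype]
          _ ≤ ENNReal.ofReal P * μ A + ∑ b, μ (A ∩ B b) * ENNReal.ofReal (c - (M + P)) := by
              exact add_le_add le_rfl (Finset.sum_le_sum fun b _ => hterm2 b)
          _ ≤ ENNReal.ofReal P * μ A + μ A * ENNReal.ofReal (c - (M + P)) := by
              rw [← Finset.sum_mul]
              exact add_le_add le_rfl (mul_le_mul_left hsumB _)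
          _ = μ A * ENNReal.ofReal (c - M) := by
              rw [mul_comm (ENNReal.ofReal P) (μ A), ← mul_add]
              congr 1
              rw [← ENNReal.ofReal_add hP0 (by linarith)]
              congr 1
              ring
      calc (μ A)⁻¹ * μ (A ∩ E) ≤ (μ A)⁻¹ * (μ A * ENNReal.ofReal (c - M)) :=
            mul_le_mul_right hchain _
        _ = ((μ A)⁻¹ * μ A) * ENNReal.ofReal (c - M) := by rw [mul_assoc]
        _ = ENNReal.ofReal (c - M) := by
            rw [ENNReal.inv_mul_cancel hA0 hAfin, one_mul]
    · -- mass already exceeds budget : event is empty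
      have hAE : A ∩ E = ∅ := by
        ext ω
        simp only [Set.mem_inter_iff, Set.mem_empty_iff_false, iff_false, not_and]
        intro hωA hωE
        have h1 : mass p prec f X j (k+1) ω ≤ mass p prec f X j (2*T) ω :=
          mass_mono hp hk2T ω j
        have h2 : mass p prec f X j (2*T) ω ≤ c := hωE.2
        rw [hMP ω hωA] at h1
        exact hMPc (h1.trans h2)
      rw [hAE, measure_empty, mul_zero]
      exact zero_le

end Aux

/-- **Backward-induction lemma on the execution tree.**  Consider a node `N`
at level `k` of the execution tree, represented by an outcome `ω₀` (the node
is determined by the success outcomes at steps `τ < k`), at which job `j` is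
still unfinished and the mass accumulated by `j` along the path to `N` is at
most `c ≤ 1`.  Conditioned on reaching `N`, the probability that `j` completes
by level `2T` along a path on which the total mass of `j` by step `2T` is at
most `c`, is at most `c − (mass of j along the path to N)`. -/
theorem tree_completion_bound (Ω : Type*) [MeasurableSpace Ω] (μ : Measure Ω)
    [IsProbabilityMeasure μ] (n m : ℕ) (p : Fin m → Fin n → ℝ)
    (hp : ∀ i j, p i j ∈ Set.Icc (0 : ℝ) 1)
    (prec : Fin n → Fin n → Prop) (hacyc : ∀ j, ¬Relation.TransGen prec j j)
    (f : Finset (Fin n) → ℕ → Fin m → Option (Fin n))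
    (X : ℕ → Fin m → Fin n → Ω → Bool)
    (hXmeas : ∀ t i j, Measurable (X t i j))
    (hXp : ∀ t i j, μ {ω | X t i j ω = true} = ENNReal.ofReal (p i j))
    (hXindep : iIndepFun
      (fun q : ℕ × Fin m × Fin n => X q.1 q.2.1 q.2.2) μ)
    (j : Fin n) (c : ℝ) (hc : c ≤ 1) (T k : ℕ) (hk : k ≤ 2 * T)
    (ω₀ : Ω) (hunfin : j ∈ unfinished prec f X k ω₀)
    (hmass : mass p prec f X j k ω₀ ≤ c) :
    μ[|{ω | ∀ τ < k, ∀ i i', X τ i i' ω = X τ i i' ω₀}]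
        {ω | j ∉ unfinished prec f X (2 * T) ω ∧ mass p prec f X j (2 * T) ω ≤ c}
      ≤ ENNReal.ofReal (c - mass p prec f X j k ω₀) := by
    exact tree_aux μ p hp hXmeas hXp hXindep j c T (2 * T - k) k (by omega) ω₀ hunfin hmass
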